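/- The entangler U is an involution, and conjugation by U turns the paramagnet flip operators into the dressed SPT (higher-form cluster) stabilizers: U ∘ X^r_σ ∘ U sends ψ to (λ,μ,ν) ↦ (−1)^{∫ σ̃ ∪ dμ ∪ dν} ψ(λ+σ̃, μ, ν); U ∘ X^b_ξ ∘ U sends ψ to (λ,μ,ν) ↦ (−1)^{∫ λ ∪ dξ̃ ∪ dν} ψ(λ, μ+ξ̃, ν), and this phase equals (−1)^{∫ dλ ∪ ξ̃ ∪ dν}; U ∘ X^g_ζ ∘ U sends ψ to (λ,μ,ν) ↦ (−1)^{∫ λ ∪ dμ ∪ dζ̃} ψ(λ, μ, ν+ζ̃), and this phase equals (−1)^{∫ dλ ∪ dμ ∪ ζ̃}. Consequently H_SPT = U H⁰ U†, where H⁰ is minus the sum of all flips and H_SPT is minus the sum of all dressed stabilizers (the derivation of the higher-form SPT Hamiltonian in Appendix A). -/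
import Mathlib


noncomputable section

open scoped BigOperators

/-- Transport a cochain along an equality of degrees. -/
def cellCast {cells : ℕ → Type} {i j : ℕ} (h : i = j) (x : cells i → ZMod 2) :
    cells j → ZMod 2 :=
  fun σ => x (cast (congrArg cells h.symm) σ)

/-- A *cochain system* of dimension `N` over `𝔽₂ = ZMod 2`: finite sets of cells in
each degree, `𝔽₂`-linear coboundary maps `d` with `d ∘ d = 0`, `𝔽₂`-bilinear associative
cup products satisfying the Leibniz rule, and an `𝔽₂`-linear integral on top-degree
cochains satisfying the Stokes identity.  (These are the structures carried by the `𝔽₂`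
cellular cochains of a closed Poincaré CW complex.) -/
structure CochainSystem (N : ℕ) where
  cells : ℕ → Type
  fintypeCells : ∀ i, Fintype (cells i)
  decEqCells : ∀ i, DecidableEq (cells i)
  d : ∀ i, (cells i → ZMod 2) →ₗ[ZMod 2] (cells (i + 1) → ZMod 2)
  cup : ∀ i j, (cells i → ZMod 2) →ₗ[ZMod 2]
    ((cells j → ZMod 2) →ₗ[ZMod 2] (cells (i + j) → ZMod 2))
  integ : (cells N → ZMod 2) →ₗ[ZMod 2] ZMod 2
  d_comp_d : ∀ (i : ℕ) (x : cells i → ZMod 2), d (i + 1) (d i x) = 0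
  cup_assoc : ∀ {i j k : ℕ} (u : cells i → ZMod 2) (v : cells j → ZMod 2)
    (w : cells k → ZMod 2),
    cup (i + j) k (cup i j u v) w
      = cellCast (Nat.add_assoc i j k).symm (cup i (j + k) u (cup j k v w))
  leibniz : ∀ {i j : ℕ} (u : cells i → ZMod 2) (v : cells j → ZMod 2),
    d (i + j) (cup i j u v)
      = cellCast (by omega : i + 1 + j = i + j + 1) (cup (i + 1) j (d i u) v)
        + cellCast (by omega : i + (j + 1) = i + j + 1) (cup i (j + 1) u (d j v))
  stokes : ∀ (k : ℕ) (hk : k + 1 = N) (w : cells k → ZMod 2),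
    integ (cellCast hk (d k w)) = 0

attribute [instance] CochainSystem.fintypeCells CochainSystem.decEqCells

namespace CochainSystem

variable {N : ℕ}

/-- The degree-`i` cochain space `Cⁱ`. -/
abbrev C (S : CochainSystem N) (i : ℕ) : Type := S.cells i → ZMod 2

/-- The indicator cochain `σ̃` of a cell `σ`. -/
def indicator (S : CochainSystem N) {i : ℕ} (σ : S.cells i) : S.C i :=
  fun τ => if τ = σ then 1 else 0

/-- `∫ (u ∪ v) ∪ w` when the degrees add up to `N`. -/
def integ3 (S : CochainSystem N) {i j k : ℕ} (h : i + j + k = N)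
    (u : S.C i) (v : S.C j) (w : S.C k) : ZMod 2 :=
  S.integ (cellCast h (S.cup (i + j) k (S.cup i j u v) w))

end CochainSystem

/-- The sign `(-1)ᵗ ∈ ℂ` of `t ∈ 𝔽₂`. -/
def sgn (t : ZMod 2) : ℂ := (-1 : ℂ) ^ t.val

open CochainSystem

section SPT

variable {N p q s : ℕ}

/-- A configuration of the three colours of `ℤ₂` matter fields. -/
abbrev SConfig (S : CochainSystem N) (p q s : ℕ) : Type :=
  S.C p × S.C q × S.C s

/-- The three-colour matter space `W = ((C^{p−1} × C^{q−1} × C^{s−1}) → ℂ)`. -/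
abbrev SSpace (S : CochainSystem N) (p q s : ℕ) : Type := SConfig S p q s → ℂ

/-- The CCZ entangler `U`: `(U ψ)(λ,μ,ν) = (−1)^{∫ λ ∪ dμ ∪ dν} ψ(λ,μ,ν)`. -/
def entangler (S : CochainSystem N) (h : p + 1 + (q + 1) + (s + 1) = N + 1) :
    SSpace S p q s → SSpace S p q s :=
  fun ψ x =>
    sgn (S.integ3 (show p + (q + 1) + (s + 1) = N by omega)
      x.1 (S.d q x.2.1) (S.d s x.2.2)) * ψ x

/-- The single-site flip operator `X^r_σ`: `(X^r_σ ψ)(λ,μ,ν) = ψ(λ + σ̃, μ, ν)`. -/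
def flipR (S : CochainSystem N) (p q s : ℕ) (σ : S.cells p) :
    SSpace S p q s → SSpace S p q s :=
  fun ψ x => ψ (x.1 + S.indicator σ, x.2.1, x.2.2)

/-- The single-site flip operator `X^b_ξ`. -/
def flipB (S : CochainSystem N) (p q s : ℕ) (ξ : S.cells q) :
    SSpace S p q s → SSpace S p q s :=
  fun ψ x => ψ (x.1, x.2.1 + S.indicator ξ, x.2.2)

/-- The single-site flip operator `X^g_ζ`. -/
def flipG (S : CochainSystem N) (p q s : ℕ) (ζ : S.cells s) :
    SSpace S p q s → SSpace S p q s :=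
  fun ψ x => ψ (x.1, x.2.1, x.2.2 + S.indicator ζ)

/-- The dressed red SPT (higher-form cluster) stabilizer. -/
def dressedR (S : CochainSystem N) (h : p + 1 + (q + 1) + (s + 1) = N + 1)
    (σ : S.cells p) : SSpace S p q s → SSpace S p q s :=
  fun ψ x =>
    sgn (S.integ3 (show p + (q + 1) + (s + 1) = N by omega)
        (S.indicator σ) (S.d q x.2.1) (S.d s x.2.2))
      * ψ (x.1 + S.indicator σ, x.2.1, x.2.2)

/-- The dressed blue SPT stabilizer. -/
def dressedB (S : CochainSystem N) (h : p + 1 + (q + 1) + (s + 1) = N + 1)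
    (ξ : S.cells q) : SSpace S p q s → SSpace S p q s :=
  fun ψ x =>
    sgn (S.integ3 (show p + (q + 1) + (s + 1) = N by omega)
        x.1 (S.d q (S.indicator ξ)) (S.d s x.2.2))
      * ψ (x.1, x.2.1 + S.indicator ξ, x.2.2)

/-- The dressed green SPT stabilizer. -/
def dressedG (S : CochainSystem N) (h : p + 1 + (q + 1) + (s + 1) = N + 1)
    (ζ : S.cells s) : SSpace S p q s → SSpace S p q s :=
  fun ψ x =>
    sgn (S.integ3 (show p + (q + 1) + (s + 1) = N by omega)
        x.1 (S.d q x.2.1) (S.d s (S.indicator ζ)))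
      * ψ (x.1, x.2.1, x.2.2 + S.indicator ζ)

/-- The trivial paramagnet Hamiltonian `H⁰`: minus the sum of all single-site flips. -/
def H0 (S : CochainSystem N) (p q s : ℕ) : SSpace S p q s → SSpace S p q s :=
  -((∑ σ : S.cells p, flipR S p q s σ) + (∑ ξ : S.cells q, flipB S p q s ξ)
    + (∑ ζ : S.cells s, flipG S p q s ζ))

/-- The higher-form SPT Hamiltonian: minus the sum of all dressed stabilizers. -/
def HSPT (S : CochainSystem N) (h : p + 1 + (q + 1) + (s + 1) = N + 1) :
    SSpace S p q s → SSpace S p q s :=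
  -((∑ σ : S.cells p, dressedR S h σ) + (∑ ξ : S.cells q, dressedB S h ξ)
    + (∑ ζ : S.cells s, dressedG S h ζ))

end SPT

section AuxLemmas

lemma sgn_zero' : sgn 0 = 1 := by
  rw [sgn, show (0 : ZMod 2).val = 0 from rfl, pow_zero]

lemma sgn_one' : sgn 1 = -1 := by
  rw [sgn, show (1 : ZMod 2).val = 1 from rfl, pow_one]

lemma zmod2_cases (t : ZMod 2) : t = 0 ∨ t = 1 := by revert t; decide

lemma sgn_add' (a b : ZMod 2) : sgn (a + b) = sgn a * sgn b := by
  rcases zmod2_cases a with rfl | rfl <;> rcases zmod2_cases b with rfl | rfl <;>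
    first
      | rw [add_zero, sgn_zero', mul_one]
      | rw [zero_add, sgn_zero', one_mul]
      | rw [show (1 : ZMod 2) + 1 = 0 from rfl, sgn_zero', sgn_one']; norm_num

lemma sgn_sq' (a : ZMod 2) : sgn a * sgn a = 1 := by
  rw [← sgn_add', show a + a = 0 by rw [CharTwo.add_self_eq_zero], sgn_zero']

lemma zmod2_add_eq_zero {a b : ZMod 2} (h : a + b = 0) : a = b := by
  revert h; revert a b; decide

variable {N : ℕ} (S : CochainSystem N)

lemma cellCast_add' {cells : ℕ → Type} {i j : ℕ} (h : i = j) (x y : cells i → ZMod 2) :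
    cellCast (cells := cells) h (x + y) = cellCast h x + cellCast h y := rfl

lemma cellCast_zero' {cells : ℕ → Type} {i j : ℕ} (h : i = j) :
    cellCast (cells := cells) h (0 : cells i → ZMod 2) = 0 := rfl

lemma cup_cellCast_left' {i i' j : ℕ} (h : i = i') (u : S.C i) (v : S.C j) :
    S.cup i' j (cellCast h u) v = cellCast (by rw [h]) (S.cup i j u v) := by
  subst h; rfl

lemma integ_cellCast_cellCast' {i j : ℕ} (h1 : i = j) (h2 : j = N) (x : S.C i) :
    S.integ (cellCast h2 (cellCast h1 x)) = S.integ (cellCast (h1.trans h2) x) := by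
  subst h1; rfl

lemma integ3_add_left' {i j k : ℕ} (h : i + j + k = N) (u u' : S.C i)
    (v : S.C j) (w : S.C k) :
    S.integ3 h (u + u') v w = S.integ3 h u v w + S.integ3 h u' v w := by
  unfold CochainSystem.integ3
  simp only [map_add, LinearMap.add_apply, cellCast_add', map_add]

lemma integ3_add_mid' {i j k : ℕ} (h : i + j + k = N) (u : S.C i)
    (v v' : S.C j) (w : S.C k) :
    S.integ3 h u (v + v') w = S.integ3 h u v w + S.integ3 h u v' w := by
  unfold CochainSystem.integ3
  simp only [map_add, LinearMap.add_apply, cellCast_add', map_add]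

lemma integ3_add_right' {i j k : ℕ} (h : i + j + k = N) (u : S.C i)
    (v : S.C j) (w w' : S.C k) :
    S.integ3 h u v (w + w') = S.integ3 h u v w + S.integ3 h u v w' := by
  unfold CochainSystem.integ3
  simp only [map_add, LinearMap.add_apply, cellCast_add', map_add]

lemma stokes_cup' {m c : ℕ} (hm : m + c + 1 = N) (u : S.C m) (w : S.C c) :
    S.integ (cellCast (show m + 1 + c = N by omega)
        (S.cup (m + 1) c (S.d m u) w))
      = S.integ (cellCast (show m + (c + 1) = N by omega)
        (S.cup m (c + 1) u (S.d c w))) := by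
  have h0 := S.stokes (m + c) hm (S.cup m c u w)
  rw [S.leibniz u w, cellCast_add', map_add,
    integ_cellCast_cellCast', integ_cellCast_cellCast'] at h0
  have := zmod2_add_eq_zero h0
  rw [this]

/-- Blue/green Leibniz–Stokes identity, general form: `∫ (du ∪ v) ∪ dν = ∫ (u ∪ dv) ∪ dν`. -/
lemma integ3_swap_d' {a b c : ℕ} (h1 : a + (b + 1) + (c + 1) = N)
    (h2 : a + 1 + b + (c + 1) = N) (u : S.C a) (v : S.C b) (ν : S.C c) :
    S.integ3 h1 u (S.d b v) (S.d c ν) = S.integ3 h2 (S.d a u) v (S.d c ν) := by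
  have hm : (a + b) + (c + 1) + 1 = N := by omega
  have key := stokes_cup' S hm (S.cup a b u v) (S.d c ν)
  rw [S.d_comp_d c ν, map_zero, cellCast_zero', map_zero] at key
  rw [S.leibniz u v, map_add, LinearMap.add_apply, cup_cellCast_left',
    cup_cellCast_left', cellCast_add', map_add, integ_cellCast_cellCast',
    integ_cellCast_cellCast'] at key
  have := zmod2_add_eq_zero key
  unfold CochainSystem.integ3
  rw [← this]

/-- Green Leibniz–Stokes identity: `∫ (u ∪ dμ) ∪ dζ = ∫ (du ∪ dμ) ∪ ζ`. -/
lemma integ3_swap_d2' {a b c : ℕ} (h1 : a + (b + 1) + (c + 1) = N)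
    (h3 : a + 1 + (b + 1) + c = N) (u : S.C a) (μ : S.C b) (ζ : S.C c) :
    S.integ3 h1 u (S.d b μ) (S.d c ζ) = S.integ3 h3 (S.d a u) (S.d b μ) ζ := by
  have hm : (a + (b + 1)) + c + 1 = N := by omega
  have key := stokes_cup' S hm (S.cup a (b + 1) u (S.d b μ)) ζ
  rw [S.leibniz u (S.d b μ)] at key
  rw [S.d_comp_d b μ, map_zero, cellCast_zero', add_zero] at key
  rw [cup_cellCast_left', integ_cellCast_cellCast'] at key
  unfold CochainSystem.integ3
  rw [key]

end AuxLemmas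

/-- **Appendix A (derivation of the higher-form SPT Hamiltonian).** The entangler `U`
is an involution; conjugation by `U` turns the paramagnet flip operators into the
dressed SPT (higher-form cluster) stabilizers, with the stated phases (and the
alternative expressions of the blue/green phases via the Leibniz/Stokes identities);
consequently `H_SPT = U ∘ H⁰ ∘ U` (`U† = U` since `U` is a real diagonal involution). -/
theorem spt_hamiltonian_from_entangler
    {N p q s : ℕ} (S : CochainSystem N) (h : p + 1 + (q + 1) + (s + 1) = N + 1) :
    (entangler S h ∘ entangler S h = id) ∧
    (∀ (σ : S.cells p) (ψ : SSpace S p q s) (x : SConfig S p q s),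
      (entangler S h ∘ flipR S p q s σ ∘ entangler S h) ψ x
        = sgn (S.integ3 (show p + (q + 1) + (s + 1) = N by omega)
            (S.indicator σ) (S.d q x.2.1) (S.d s x.2.2))
          * ψ (x.1 + S.indicator σ, x.2.1, x.2.2)) ∧
    (∀ (ξ : S.cells q) (ψ : SSpace S p q s) (x : SConfig S p q s),
      (entangler S h ∘ flipB S p q s ξ ∘ entangler S h) ψ x
        = sgn (S.integ3 (show p + (q + 1) + (s + 1) = N by omega)
            x.1 (S.d q (S.indicator ξ)) (S.d s x.2.2))
          * ψ (x.1, x.2.1 + S.indicator ξ, x.2.2)) ∧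
    (∀ (ξ : S.cells q) (lam : S.C p) (ν : S.C s),
      S.integ3 (show p + (q + 1) + (s + 1) = N by omega)
          lam (S.d q (S.indicator ξ)) (S.d s ν)
        = S.integ3 (show p + 1 + q + (s + 1) = N by omega)
            (S.d p lam) (S.indicator ξ) (S.d s ν)) ∧
    (∀ (ζ : S.cells s) (ψ : SSpace S p q s) (x : SConfig S p q s),
      (entangler S h ∘ flipG S p q s ζ ∘ entangler S h) ψ x
        = sgn (S.integ3 (show p + (q + 1) + (s + 1) = N by omega)
            x.1 (S.d q x.2.1) (S.d s (S.indicator ζ)))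
          * ψ (x.1, x.2.1, x.2.2 + S.indicator ζ)) ∧
    (∀ (ζ : S.cells s) (lam : S.C p) (μ : S.C q),
      S.integ3 (show p + (q + 1) + (s + 1) = N by omega)
          lam (S.d q μ) (S.d s (S.indicator ζ))
        = S.integ3 (show p + 1 + (q + 1) + s = N by omega)
            (S.d p lam) (S.d q μ) (S.indicator ζ)) ∧
    (HSPT S h = entangler S h ∘ H0 S p q s ∘ entangler S h) := by
  have key : ∀ (A B c : ℂ), A * A = 1 → A * (A * B * c) = B * c := by
    intro A B c hA
    calc A * (A * B * c) = (A * A) * (B * c) := by ring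
      _ = B * c := by rw [hA, one_mul]
  have hinv : entangler S h ∘ entangler S h = id := by
    funext ψ x
    simp only [Function.comp_apply, entangler, id_eq]
    rw [← mul_assoc, sgn_sq', one_mul]
  have hredOp : ∀ σ : S.cells p,
      entangler S h ∘ flipR S p q s σ ∘ entangler S h = dressedR S h σ := by
    intro σ
    funext ψ x
    simp only [Function.comp_apply, entangler, flipR, dressedR]
    rw [integ3_add_left', sgn_add']
    exact key _ _ _ (sgn_sq' _)
  have hblueOp : ∀ ξ : S.cells q,
      entangler S h ∘ flipB S p q s ξ ∘ entangler S h = dressedB S h ξ := by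
    intro ξ
    funext ψ x
    simp only [Function.comp_apply, entangler, flipB, dressedB]
    rw [map_add, integ3_add_mid', sgn_add']
    exact key _ _ _ (sgn_sq' _)
  have hgreenOp : ∀ ζ : S.cells s,
      entangler S h ∘ flipG S p q s ζ ∘ entangler S h = dressedG S h ζ := by
    intro ζ
    funext ψ x
    simp only [Function.comp_apply, entangler, flipG, dressedG]
    rw [map_add, integ3_add_right', sgn_add']
    exact key _ _ _ (sgn_sq' _)
  refine ⟨hinv, ?_, ?_, ?_, ?_, ?_, ?_⟩
  · intro σ ψ x
    rw [hredOp σ]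
    rfl
  · intro ξ ψ x
    rw [hblueOp ξ]
    rfl
  · intro ξ lam ν
    exact integ3_swap_d' S _ _ lam (S.indicator ξ) ν
  · intro ζ ψ x
    rw [hgreenOp ζ]
    rfl
  · intro ζ lam μ
    exact integ3_swap_d2' S _ _ lam μ (S.indicator ζ)
  · funext ψ x
    simp only [HSPT, H0, Function.comp_apply, Pi.neg_apply, Pi.add_apply,
      Finset.sum_apply]
    have expand : ∀ (F : SSpace S p q s → SSpace S p q s),
        entangler S h (F (entangler S h ψ)) x
          = (entangler S h ∘ F ∘ entangler S h) ψ x := fun _ => rfl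
    rw [show (entangler S h) = fun ψ (x : SConfig S p q s) =>
      sgn (S.integ3 (show p + (q + 1) + (s + 1) = N by omega)
        x.1 (S.d q x.2.1) (S.d s x.2.2)) * ψ x from rfl]
    simp only [Pi.neg_apply, Pi.add_apply, Finset.sum_apply, mul_neg, mul_add,
      Finset.mul_sum]
    congr 1
    congr 1
    · congr 1
      · refine Finset.sum_congr rfl fun σ _ => ?_
        rw [← hredOp σ]
        rfl
      · refine Finset.sum_congr rfl fun ξ _ => ?_
        rw [← hblueOp ξ]
        rfl
    · refine Finset.sum_congr rfl fun ζ _ => ?_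
      rw [← hgreenOp ζ]
      rfl
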